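/- arXiv:0809.2719 — 5 statements merged into one kernel-verified Lean document; each statement's English description precedes it below -/
import Mathlib

section
/- Let φ be a continuous RDS on a Polish space E over an MDS (Ω,𝓕,P,(ϑ_t)). If φ has a strong B-attractor, then for every ε>0 there exists a compact subset C_ε of E such that for each δ>0 and each bounded and closed subset B of E one has P{B ⊆ ⋃_{s≥0} ⋂_{t≥s} φ(t,ϑ_{-t}ω)^{-1}(C_ε^δ)} ≥ 1−ε. -/
open MeasureTheory Set Filter Topology Metric

noncomputable section

/-- Hausdorff semi-distance `d(B, A) = sup_{b ∈ B} inf_{a ∈ A} d(b, a)`, valued in `ℝ≥0∞`. -/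
def semiDist {E : Type*} [PseudoEMetricSpace E] (B A : Set E) : ENNReal :=
  ⨆ b ∈ B, EMetric.infEdist b A

/-- A metric dynamical system (MDS) over the probability space `(Ω, 𝓕, P)`. -/
structure MetricDS (Ω : Type*) [MeasurableSpace Ω] (P : Measure Ω) where
  θ : ℝ → Ω → Ω
  measurable_theta : Measurable fun p : ℝ × Ω => θ p.1 p.2
  theta_add : ∀ s t : ℝ, θ (s + t) = θ s ∘ θ t
  theta_zero : θ 0 = id
  measurePreserving_theta : ∀ t : ℝ, MeasurePreserving (θ t) P P

/-- A continuous random dynamical system (RDS) `φ` on `E` over an MDS, with time `[0,∞)`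
(the map is defined for all real times, but only its restriction to `t ≥ 0` is constrained). -/
structure ContinuousRDS (E Ω : Type*) [MetricSpace E] [MeasurableSpace E]
    [MeasurableSpace Ω] (P : Measure Ω) extends MetricDS Ω P where
  φ : ℝ → E → Ω → E
  measurable_phi : Measurable fun p : ℝ × E × Ω => φ p.1 p.2.1 p.2.2
  cocycle : ∀ s t : ℝ, 0 ≤ s → 0 ≤ t → ∀ x ω, φ (t + s) x ω = φ t (φ s x ω) (θ s ω)
  phi_zero : ∀ x ω, φ 0 x ω = x
  continuous_phi : ∀ t : ℝ, 0 ≤ t → ∀ ω, Continuous fun x => φ t x ω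

variable {E Ω : Type*} [MetricSpace E] [MeasurableSpace E] [MeasurableSpace Ω] {P : Measure Ω}

/-- A compact random set: values are nonempty compact subsets of `E`, and
`ω ↦ d(x, K ω)` is measurable for every `x`. -/
def IsCompactRandomSet (K : Ω → Set E) : Prop :=
  (∀ ω, IsCompact (K ω)) ∧ (∀ ω, (K ω).Nonempty) ∧
    ∀ x : E, Measurable fun ω => infDist x (K ω)

/-- Strict `φ`-invariance: for each `t ≥ 0`, a.s. `φ(t,ω)(A(ω)) = A(ϑ_t ω)`. -/
def StrictlyInvariant (ψ : ContinuousRDS E Ω P) (A : Ω → Set E) : Prop :=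
  ∀ t : ℝ, 0 ≤ t → ∀ᵐ ω ∂P, (fun x => ψ.φ t x ω) '' A ω = A (ψ.θ t ω)

/-- `K` attracts `B` strongly: `d(φ(t, ϑ_{-t} ω)(B), K(ω)) → 0` almost surely. -/
def StronglyAttracts (ψ : ContinuousRDS E Ω P) (K : Ω → Set E) (B : Set E) : Prop :=
  ∀ᵐ ω ∂P, Tendsto (fun t : ℝ =>
    semiDist ((fun x => ψ.φ t x (ψ.θ (-t) ω)) '' B) (K ω)) atTop (𝓝 0)

/-- `K` attracts `B` weakly: `d(φ(t, ϑ_{-t} ω)(B), K(ω)) → 0` in probability. -/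
def WeaklyAttracts (ψ : ContinuousRDS E Ω P) (K : Ω → Set E) (B : Set E) : Prop :=
  ∀ ε : ENNReal, 0 < ε → Tendsto (fun t : ℝ =>
    P {ω | ε < semiDist ((fun x => ψ.φ t x (ψ.θ (-t) ω)) '' B) (K ω)}) atTop (𝓝 0)

/-- Forward version of weak attraction: `sup_{x ∈ B} d(φ(t,ω)(x), A(ϑ_t ω)) → 0` in probability. -/
def WeaklyAttractsForward (ψ : ContinuousRDS E Ω P) (A : Ω → Set E) (B : Set E) : Prop :=
  ∀ ε : ENNReal, 0 < ε → Tendsto (fun t : ℝ =>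
    P {ω | ε < semiDist ((fun x => ψ.φ t x ω) '' B) (A (ψ.θ t ω))}) atTop (𝓝 0)

/-- A strong `𝓑`-attractor. -/
def IsStrongAttractor (ψ : ContinuousRDS E Ω P) (𝓑 : Set (Set E)) (A : Ω → Set E) : Prop :=
  IsCompactRandomSet A ∧ StrictlyInvariant ψ A ∧ ∀ B ∈ 𝓑, StronglyAttracts ψ A B

/-- A weak `𝓑`-attractor. -/
def IsWeakAttractor (ψ : ContinuousRDS E Ω P) (𝓑 : Set (Set E)) (A : Ω → Set E) : Prop :=
  IsCompactRandomSet A ∧ StrictlyInvariant ψ A ∧ ∀ B ∈ 𝓑, WeaklyAttractsForward ψ A B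

/-- The `Ω`-limit set of a set `B ⊆ E`:
`Ω_B(ω) = ⋂_{T ≥ 0} closure (⋃_{t ≥ T} φ(t, ϑ_{-t} ω)(B))`. -/
def omegaLimitSet (ψ : ContinuousRDS E Ω P) (B : Set E) (ω : Ω) : Set E :=
  ⋂ T ∈ Ici (0:ℝ), closure (⋃ t ∈ Ici T, (fun x => ψ.φ t x (ψ.θ (-t) ω)) '' B)

/-
The attractor itself is tight: since `E` is separable and complete, for each radius `1/(n+1)`
finitely many balls around a dense sequence contain `A(ω)` with probability close to one, and the
intersection over `n` of these finite unions is a compact set `Cε` with `P{A ⊆ Cε} ≥ 1 - ε`. On the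
event `A(ω) ⊆ Cε`, strong attraction of `B` puts `φ(t, ϑ_{-t}ω)(B)` into `Cε^δ` for all large `t`.
-/

open TopologicalSpace
open scoped ENNReal

section Tightness

variable {X : Type*} [PseudoMetricSpace X]

theorem Metric.subset_iff_forall_infDist_le {s K : Set X} (hs : s.Nonempty) (hK : IsClosed K)
    (hK' : K.Nonempty) : s ⊆ K ↔ ∀ x, infDist x K ≤ infDist x s := by
  refine ⟨fun hsK x => infDist_le_infDist_of_subset hsK hs, fun h a ha => ?_⟩
  rw [hK.mem_iff_infDist_zero hK']
  exact le_antisymm ((h a).trans (infDist_zero_of_mem ha).le) infDist_nonneg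

theorem IsCompact.exists_subset_biUnion_closedBall_of_denseRange {u : ℕ → X} (hu : DenseRange u)
    {K : Set X} (hK : IsCompact K) {r : ℝ} (hr : 0 < r) :
    ∃ m, K ⊆ ⋃ y ∈ u '' Iio m, closedBall y r := by
  have hcover : K ⊆ ⋃ k, ball (u k) r := fun x _ => by
    obtain ⟨k, hk⟩ := hu.exists_dist_lt x hr
    exact mem_iUnion.2 ⟨k, mem_ball.2 hk⟩
  obtain ⟨t, ht⟩ := hK.elim_finite_subcover _ (fun _ => isOpen_ball) hcover
  refine ⟨t.sup id + 1, ht.trans (iUnion₂_subset fun k hk => ?_)⟩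
  refine ball_subset_closedBall.trans
    (subset_biUnion_of_mem (u := fun y => closedBall y r) (mem_image_of_mem u ?_))
  exact Nat.lt_succ_of_le (Finset.le_sup (f := id) hk)

theorem isCompact_iInter_biUnion_closedBall [CompleteSpace X] {t : ℕ → Set X}
    (ht : ∀ n, (t n).Finite) {r : ℕ → ℝ} (hr : Tendsto r atTop (𝓝 0)) :
    IsCompact (⋂ n, ⋃ y ∈ t n, closedBall y (r n)) := by
  refine TotallyBounded.isCompact_of_isClosed (totallyBounded_iff.2 fun ε hε => ?_)
    (isClosed_iInter fun n => (ht n).isClosed_biUnion fun _ _ => isClosed_closedBall)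
  obtain ⟨n, hn⟩ := (hr.eventually (gt_mem_nhds hε)).exists
  exact ⟨t n, ht n, (iInter_subset _ n).trans
    (biUnion_mono subset_rfl fun _ _ => closedBall_subset_ball hn)⟩

variable {α : Type*} [MeasurableSpace α] {s : α → Set X}

theorem measurableSet_setOf_subset_of_measurable_infDist [SeparableSpace X]
    (hne : ∀ a, (s a).Nonempty) (hmeas : ∀ x, Measurable fun a => infDist x (s a))
    {K : Set X} (hK : IsClosed K) : MeasurableSet {a | s a ⊆ K} := by
  rcases K.eq_empty_or_nonempty with rfl | hK'
  · simp only [subset_empty_iff, (hne _).ne_empty, ofPred_false, MeasurableSet.empty]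
  have : Nonempty X := ⟨hK'.some⟩
  obtain ⟨u, hu⟩ := exists_dense_seq X
  have hdense : ∀ a, (∀ x, infDist x K ≤ infDist x (s a)) ↔
      ∀ k, infDist (u k) K ≤ infDist (u k) (s a) :=
    fun a => ⟨fun h k => h (u k), fun h x => hu.induction_on x
      (isClosed_le (continuous_infDist_pt K) (continuous_infDist_pt (s a))) h⟩
  simp_rw [Metric.subset_iff_forall_infDist_le (hne _) hK hK', hdense, ofPred_forall]
  exact MeasurableSet.iInter fun k => measurableSet_le measurable_const (hmeas (u k))

variable {μ : Measure α} [IsFiniteMeasure μ]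

theorem exists_finite_measure_compl_setOf_subset_biUnion_closedBall_lt [SeparableSpace X]
    (hcomp : ∀ a, IsCompact (s a)) (hne : ∀ a, (s a).Nonempty)
    (hmeas : ∀ x, Measurable fun a => infDist x (s a)) {r : ℝ} (hr : 0 < r) {η : ℝ≥0∞}
    (hη : η ≠ 0) :
    ∃ t : Set X, t.Finite ∧ μ {a | s a ⊆ ⋃ y ∈ t, closedBall y r}ᶜ < η := by
  rcases isEmpty_or_nonempty X with hX | hX
  · exact ⟨∅, finite_empty, by simp [pos_iff_ne_zero.2 hη]⟩
  obtain ⟨u, hu⟩ := exists_dense_seq X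
  set S : ℕ → Set α := fun m => {a | s a ⊆ ⋃ y ∈ u '' Iio m, closedBall y r}
  have hS_meas : ∀ m, MeasurableSet (S m) := fun m =>
    measurableSet_setOf_subset_of_measurable_infDist hne hmeas
      (((finite_Iio m).image u).isClosed_biUnion fun _ _ => isClosed_closedBall)
  have hS_compl_anti : Antitone fun m => (S m)ᶜ := fun m n hmn =>
    compl_subset_compl.2 fun a ha => ha.trans
      (biUnion_subset_biUnion_left (image_mono (Iio_subset_Iio hmn)))
  have hS_cover : ⋂ m, (S m)ᶜ = ∅ := by
    simp only [← compl_iUnion, compl_empty_iff, eq_univ_iff_forall, mem_iUnion]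
    exact fun a => (hcomp a).exists_subset_biUnion_closedBall_of_denseRange hu hr
  have hlim := tendsto_measure_iInter_atTop (fun m => (hS_meas m).compl.nullMeasurableSet)
    hS_compl_anti ⟨0, measure_ne_top μ _⟩
  rw [hS_cover, measure_empty] at hlim
  obtain ⟨m, hm⟩ := (hlim.eventually_lt_const (pos_iff_ne_zero.2 hη)).exists
  exact ⟨u '' Iio m, (finite_Iio m).image u, hm⟩

theorem exists_isCompact_measure_compl_setOf_subset_le [CompleteSpace X] [SeparableSpace X]
    (hcomp : ∀ a, IsCompact (s a)) (hne : ∀ a, (s a).Nonempty)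
    (hmeas : ∀ x, Measurable fun a => infDist x (s a)) {ε : ℝ≥0∞} (hε : ε ≠ 0) :
    ∃ C, IsCompact C ∧ μ {a | s a ⊆ C}ᶜ ≤ ε := by
  obtain ⟨η, hη_pos, hη_sum⟩ := ENNReal.exists_pos_sum_of_countable' hε ℕ
  choose t ht_fin ht using fun n : ℕ =>
    exists_finite_measure_compl_setOf_subset_biUnion_closedBall_lt (μ := μ) hcomp hne hmeas
      (Nat.one_div_pos_of_nat (n := n)) (hη_pos n).ne'
  refine ⟨_, isCompact_iInter_biUnion_closedBall ht_fin
    tendsto_one_div_add_atTop_nhds_zero_nat, ?_⟩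
  calc μ {a | s a ⊆ ⋂ n, ⋃ y ∈ t n, closedBall y (1 / (n + 1 : ℝ))}ᶜ
      = μ (⋃ n, {a | s a ⊆ ⋃ y ∈ t n, closedBall y (1 / (n + 1 : ℝ))}ᶜ) := by
        simp only [subset_iInter_iff, ofPred_forall, compl_iInter]
    _ ≤ ∑' n, μ {a | s a ⊆ ⋃ y ∈ t n, closedBall y (1 / (n + 1 : ℝ))}ᶜ :=
        measure_iUnion_le _
    _ ≤ ∑' n, η n := ENNReal.tsum_le_tsum fun n => (ht n).le
    _ ≤ ε := hη_sum.le

end Tightness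

section Attraction

variable {X : Type*} [PseudoEMetricSpace X]

theorem infEDist_le_semiDist {S K : Set X} {x : X} (hx : x ∈ S) :
    Metric.infEDist x K ≤ semiDist S K :=
  le_iSup₂ (f := fun b _ => Metric.infEDist b K) x hx

theorem eventually_mapsTo_cthickening_of_tendsto_semiDist {ι : Type*} {l : Filter ι}
    {f : ι → X → X} {B K C : Set X} (h : Tendsto (fun i => semiDist (f i '' B) K) l (𝓝 0))
    (hKC : K ⊆ C) {δ : ℝ} (hδ : 0 < δ) :
    ∀ᶠ i in l, MapsTo (f i) B (cthickening δ C) := by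
  filter_upwards [h.eventually_lt_const (ENNReal.ofReal_pos.2 hδ)] with i hi x hx
  exact mem_cthickening_iff.2 ((Metric.infEDist_anti hKC).trans
    ((infEDist_le_semiDist (mem_image_of_mem _ hx)).trans hi.le))

end Attraction

theorem subset_iUnion_iInter_preimage_of_eventually_mapsTo {X Y : Type*} {f : ℝ → X → Y}
    {B : Set X} {U : Set Y} (h : ∀ᶠ t in atTop, MapsTo (f t) B U) :
    B ⊆ ⋃ s ∈ Ici (0:ℝ), ⋂ t ∈ Ici s, f t ⁻¹' U := fun x hx => by
  obtain ⟨s, hs⟩ := eventually_atTop.1 h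
  exact mem_iUnion₂.2 ⟨max s 0, mem_Ici.2 (le_max_right s 0),
    mem_iInter₂.2 fun t ht => hs t ((le_max_left _ _).trans ht) hx⟩

theorem strongB_attractor_necessary_condition_general
    [CompleteSpace E] [SecondCountableTopology E] [IsProbabilityMeasure P]
    (ψ : ContinuousRDS E Ω P) (A : Ω → Set E)
    (hA : IsStrongAttractor ψ {B : Set E | Bornology.IsBounded B} A) :
    ∀ ε : ℝ, 0 < ε → ∃ Cε : Set E, IsCompact Cε ∧
      ∀ δ : ℝ, 0 < δ → ∀ B : Set E, Bornology.IsBounded B → IsClosed B →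
        ENNReal.ofReal (1 - ε) ≤
          P {ω | B ⊆ ⋃ s ∈ Ici (0:ℝ), ⋂ t ∈ Ici s,
              (fun x => ψ.φ t x (ψ.θ (-t) ω)) ⁻¹' cthickening δ Cε} := by
  obtain ⟨⟨hAcomp, hAne, hAmeas⟩, -, hattr⟩ := hA
  intro ε hε
  obtain ⟨C, hC, hPC⟩ := exists_isCompact_measure_compl_setOf_subset_le (μ := P) hAcomp hAne
    hAmeas (ENNReal.ofReal_pos.2 hε).ne'
  refine ⟨C, hC, fun δ hδ B hB _ => ?_⟩
  have hattracted : ∀ᵐ ω ∂P, A ω ⊆ C →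
      B ⊆ ⋃ s ∈ Ici (0:ℝ), ⋂ t ∈ Ici s, (fun x => ψ.φ t x (ψ.θ (-t) ω)) ⁻¹' cthickening δ C := by
    filter_upwards [hattr B hB] with ω hω hAC
    exact subset_iUnion_iInter_preimage_of_eventually_mapsTo
      (eventually_mapsTo_cthickening_of_tendsto_semiDist hω hAC hδ)
  calc ENNReal.ofReal (1 - ε) = 1 - ENNReal.ofReal ε := by
        rw [ENNReal.ofReal_sub _ hε.le, ENNReal.ofReal_one]
    _ ≤ 1 - P {ω | A ω ⊆ C}ᶜ := tsub_le_tsub_left hPC 1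
    _ ≤ P {ω | A ω ⊆ C} := tsub_le_iff_right.2 (by
        simpa only [measure_univ] using measure_univ_le_add_compl (μ := P) {ω | A ω ⊆ C})
    _ ≤ _ := measure_mono_ae hattracted

/-- If `φ` has a strong `B`-attractor, then for every `ε > 0` there is a compact `Cε` such that
for each `δ > 0` and each bounded closed `B ⊆ E`,
`P{B ⊆ ⋃_{s ≥ 0} ⋂_{t ≥ s} φ(t, ϑ_{-t} ω)⁻¹(Cε^δ)} ≥ 1 - ε`. -/
theorem strongB_attractor_necessary_condition
    [CompleteSpace E] [SecondCountableTopology E] [BorelSpace E] [IsProbabilityMeasure P]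
    (ψ : ContinuousRDS E Ω P) (A : Ω → Set E)
    (hA : IsStrongAttractor ψ {B : Set E | Bornology.IsBounded B} A) :
    ∀ ε : ℝ, 0 < ε → ∃ Cε : Set E, IsCompact Cε ∧
      ∀ δ : ℝ, 0 < δ → ∀ B : Set E, Bornology.IsBounded B → IsClosed B →
        ENNReal.ofReal (1 - ε) ≤
          P {ω | B ⊆ ⋃ s ∈ Ici (0:ℝ), ⋂ t ∈ Ici s,
              (fun x => ψ.φ t x (ψ.θ (-t) ω)) ⁻¹' cthickening δ Cε} :=
  strongB_attractor_necessary_condition_general ψ A hA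
end
end

section
/- Let φ be a continuous RDS on a Polish space E over an MDS (Ω,𝓕,P,(ϑ_t)). If there exists a compact random set K which strongly attracts every bounded subset of E, then φ has a strong B-attractor. -/
open MeasureTheory Set Filter Topology Metric

noncomputable section

variable {E Ω : Type*} [MetricSpace E] [MeasurableSpace E] [MeasurableSpace Ω] {P : Measure Ω}

/-!
Fix `x₀ ∈ E` and let `A(ω)` be the closure of the union of the integer-time pullback
`Ω`-limit sets of the balls `closedBall x₀ c`, `c ∈ ℕ`; these lie in `K(ω)`, so `A(ω)` is compact.
Attraction by `K` gives every pullback sequence `φ(u_j, ϑ_{-u_j} ω) x_j` with bounded data a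
subsequence converging into `K(ω)`, and writes each of its limits `y` as `φ(k, ϑ_{-k} ω) w` with
`w ∈ K(ϑ_{-k} ω)`, for every integer `k`. Poincaré recurrence for `ϑ_{-1}` puts `K(ϑ_{-k} ω)`
inside one fixed ball for infinitely many `k`, so `y ∈ A(ω)`. This capture property yields
attraction and invariance. Integer times and a countable dense subset of each ball turn
`infEDist x (A ω)` into countable infima and suprema of measurable functions; off a null set
`A` is replaced by `K`.
-/

open scoped ENNReal

open TopologicalSpace

section SemiDist

variable {X : Type*} [PseudoEMetricSpace X]

theorem semiDist_eq_iSup (B A : Set X) : semiDist B A = ⨆ b ∈ B, infEDist b A :=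
  rfl

theorem infEDist_le_semiDist_s2 {B A : Set X} {b : X} (hb : b ∈ B) :
    infEDist b A ≤ semiDist B A :=
  le_iSup₂ (f := fun b _ => infEDist b A) b hb

theorem semiDist_le_iff {B A : Set X} {δ : ℝ≥0∞} :
    semiDist B A ≤ δ ↔ ∀ b ∈ B, infEDist b A ≤ δ :=
  iSup₂_le_iff

theorem exists_lt_infEDist_of_lt_semiDist {B A : Set X} {ε : ℝ≥0∞} (h : ε < semiDist B A) :
    ∃ b ∈ B, ε < infEDist b A := by
  simpa only [semiDist_eq_iSup, lt_iSup_iff, exists_prop] using h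

theorem semiDist_closure (B A : Set X) : semiDist (closure B) A = semiDist B A :=
  le_antisymm
    (semiDist_le_iff.2 fun _ hb =>
      closure_minimal (fun _ => infEDist_le_semiDist_s2)
        (isClosed_le continuous_infEDist continuous_const) hb)
    (semiDist_le_iff.2 fun _ hb => infEDist_le_semiDist_s2 (subset_closure hb))

theorem tendsto_infEDist_of_tendsto_semiDist {ι : Type*} {l : Filter ι} {B : ι → Set X}
    {A : Set X} {z : ι → X} (hz : ∀ i, z i ∈ B i)
    (h : Tendsto (fun i => semiDist (B i) A) l (𝓝 0)) :
    Tendsto (fun i => infEDist (z i) A) l (𝓝 0) :=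
  tendsto_of_tendsto_of_tendsto_of_le_of_le tendsto_const_nhds h (fun _ => zero_le)
    fun i => infEDist_le_semiDist_s2 (hz i)

theorem IsCompact.exists_subseq_tendsto_of_tendsto_infEDist {K : Set X} (hK : IsCompact K)
    (hne : K.Nonempty) {z : ℕ → X} (hz : Tendsto (fun j => infEDist (z j) K) atTop (𝓝 0)) :
    ∃ w ∈ K, ∃ ι : ℕ → ℕ, StrictMono ι ∧ Tendsto (z ∘ ι) atTop (𝓝 w) := by
  choose p hpK hp using fun j => hK.exists_infEDist_eq_edist hne (z j)
  obtain ⟨w, hwK, ι, hι, hpw⟩ := hK.tendsto_subseq hpK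
  refine ⟨w, hwK, ι, hι, tendsto_iff_edist_tendsto_0.2 ?_⟩
  have hsum : Tendsto (fun j => infEDist (z (ι j)) K + edist (p (ι j)) w) atTop (𝓝 0) := by
    simpa using (hz.comp hι.tendsto_atTop).add (tendsto_iff_edist_tendsto_0.1 hpw)
  refine tendsto_of_tendsto_of_tendsto_of_le_of_le tendsto_const_nhds hsum
    (fun _ => zero_le) fun j => ?_
  calc edist (z (ι j)) w ≤ edist (z (ι j)) (p (ι j)) + edist (p (ι j)) w := edist_triangle _ _ _
    _ = infEDist (z (ι j)) K + edist (p (ι j)) w := by rw [hp]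

theorem iInter_subset_of_tendsto_semiDist {F : ℕ → Set X} {K : Set X} (hK : IsClosed K)
    (hFK : Tendsto (fun m => semiDist (F m) K) atTop (𝓝 0)) : ⋂ m, F m ⊆ K := by
  intro y hy
  have hy0 : infEDist y K ≤ 0 :=
    ge_of_tendsto' hFK fun m => infEDist_le_semiDist_s2 (mem_iInter.1 hy m)
  rw [← hK.closure_eq, mem_closure_iff_infEDist_zero]
  exact le_zero_iff.1 hy0

theorem infEDist_iInter_eq_iSup {F : ℕ → Set X} (hanti : Antitone F)
    (hclosed : ∀ m, IsClosed (F m)) {K : Set X} (hK : IsCompact K) (hne : K.Nonempty)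
    (hFK : Tendsto (fun m => semiDist (F m) K) atTop (𝓝 0)) (x : X) :
    infEDist x (⋂ m, F m) = ⨆ m, infEDist x (F m) := by
  refine le_antisymm ?_ (iSup_le fun m => infEDist_anti (iInter_subset F m))
  refine ENNReal.le_of_forall_pos_le_add fun ε hε hfin => ?_
  have hnear : ∀ m, ∃ y ∈ F m, edist x y < (⨆ m, infEDist x (F m)) + ε := fun m =>
    infEDist_lt_iff.1 <|
      (le_iSup _ m).trans_lt (ENNReal.lt_add_right hfin.ne (by simpa using hε.ne'))
  choose y hyF hyx using hnear
  obtain ⟨w, -, ι, hι, hyw⟩ :=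
    hK.exists_subseq_tendsto_of_tendsto_infEDist hne (tendsto_infEDist_of_tendsto_semiDist hyF hFK)
  have hw : w ∈ ⋂ m, F m := mem_iInter.2 fun m => (hclosed m).mem_of_tendsto hyw
    (eventually_atTop.2 ⟨m, fun j hj => hanti (hj.trans hι.le_apply) (hyF (ι j))⟩)
  calc infEDist x (⋂ m, F m) ≤ edist x w := infEDist_le_edist_of_mem hw
    _ ≤ _ := le_of_tendsto (((continuous_const.edist continuous_id).tendsto w).comp hyw)
        (Eventually.of_forall fun j => (hyx (ι j)).le)

end SemiDist

theorem infEDist_image_eq_of_subset_closure {X Y : Type*} [TopologicalSpace X]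
    [PseudoEMetricSpace Y] {f : X → Y} (hf : Continuous f) {S D : Set X} (hDS : D ⊆ S)
    (hSD : S ⊆ closure D) (y : Y) : infEDist y (f '' S) = infEDist y (f '' D) :=
  le_antisymm (infEDist_anti (image_mono hDS)) <| by
    rw [← infEDist_closure (s := f '' D)]
    exact infEDist_anti ((image_mono hSD).trans (image_closure_subset_closure_image hf))

theorem measurable_infEDist_image {α X Y : Type*} [MeasurableSpace α] [TopologicalSpace X]
    [PseudoMetrizableSpace X] [PseudoEMetricSpace Y] [MeasurableSpace Y]
    [OpensMeasurableSpace Y] {f : α → X → Y} (hcont : ∀ a, Continuous (f a))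
    (hmeas : ∀ x, Measurable fun a => f a x) {S : Set X} (hS : IsSeparable S)
    (y : Y) : Measurable fun a => infEDist y (f a '' S) := by
  obtain ⟨D, hDS, hDc, hSD⟩ := hS.exists_countable_dense_subset
  simp_rw [infEDist_image_eq_of_subset_closure (hcont _) hDS hSD, image_eq_iUnion,
    infEDist_biUnion, infEDist_singleton]
  exact Measurable.biInf D hDc fun x _ => measurable_edist_right.comp (hmeas x)

theorem subset_closedBall_iff_forall_dist_le_add_infDist {X : Type*} [PseudoMetricSpace X]
    {S : Set X} (hS : S.Nonempty) {x₀ : X} {r : ℝ} :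
    S ⊆ closedBall x₀ r ↔ ∀ x, dist x x₀ ≤ r + infDist x S := by
  refine ⟨fun h x => ?_, fun h y hy => by simpa [infDist_zero_of_mem hy] using h y⟩
  have hle : dist x x₀ - r ≤ infDist x S := (le_infDist hS).2 fun y hy => by
    linarith [dist_triangle x y x₀, mem_closedBall.1 (h hy)]
  linarith

omit [MeasurableSpace E] in
theorem IsCompactRandomSet.measurableSet_subset_closedBall [SeparableSpace E]
    {K : Ω → Set E} (hK : IsCompactRandomSet K) (x₀ : E) (r : ℝ) :
    MeasurableSet {ω | K ω ⊆ closedBall x₀ r} := by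
  have : Nonempty E := ⟨x₀⟩
  obtain ⟨q, hq⟩ := exists_dense_seq E
  have hset : {ω | K ω ⊆ closedBall x₀ r} =
      ⋂ i, {ω | dist (q i) x₀ ≤ r + infDist (q i) (K ω)} := by
    ext ω
    simp only [mem_ofPred_eq, mem_iInter,
      subset_closedBall_iff_forall_dist_le_add_infDist (hK.2.1 ω)]
    exact ⟨fun h i => h (q i), fun h x => hq.induction_on x
      (isClosed_le (continuous_id.dist continuous_const)
        (continuous_const.add (continuous_infDist_pt _))) h⟩
  rw [hset]
  exact MeasurableSet.iInter fun i => measurableSet_le measurable_const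
    (measurable_const.add (hK.2.2 (q i)))

namespace ContinuousRDS

variable (ψ : ContinuousRDS E Ω P)

def pullback (t : ℝ) (ω : Ω) : E → E := fun x => ψ.φ t x (ψ.θ (-t) ω)

theorem theta_theta (a b : ℝ) (ω : Ω) : ψ.θ a (ψ.θ b ω) = ψ.θ (a + b) ω := by
  rw [ψ.theta_add]; rfl

theorem theta_neg_theta (s : ℝ) (ω : Ω) : ψ.θ (-s) (ψ.θ s ω) = ω := by
  rw [theta_theta, neg_add_cancel, ψ.theta_zero, id]

theorem pullback_add {s t : ℝ} (hs : 0 ≤ s) (ht : 0 ≤ t) (ω : Ω) :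
    ψ.pullback (t + s) ω = ψ.pullback s ω ∘ ψ.pullback t (ψ.θ (-s) ω) := by
  ext x
  have h := ψ.cocycle t s ht hs x (ψ.θ (-(t + s)) ω)
  simp only [pullback, Function.comp, theta_theta, add_comm s t] at h ⊢
  rw [h, show t + -(t + s) = -s by ring, show -t + -s = -(t + s) by ring]

theorem pullback_add_theta {s t : ℝ} (hs : 0 ≤ s) (ht : 0 ≤ t) (ω : Ω) (x : E) :
    ψ.pullback (t + s) (ψ.θ s ω) x = ψ.φ s (ψ.pullback t ω x) ω := by
  rw [ψ.pullback_add hs ht, Function.comp_apply, theta_neg_theta]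
  simp only [pullback, theta_neg_theta]

theorem continuous_pullback {t : ℝ} (ht : 0 ≤ t) (ω : Ω) : Continuous (ψ.pullback t ω) :=
  ψ.continuous_phi t ht _

theorem measurable_pullback_apply (t : ℝ) (x : E) : Measurable fun ω => ψ.pullback t ω x :=
  ψ.measurable_phi.comp <| measurable_const.prodMk <| measurable_const.prodMk <|
    ψ.measurable_theta.comp (measurable_const.prodMk measurable_id)

theorem iterate_theta_neg_one (k : ℕ) (ω : Ω) : (ψ.θ (-1))^[k] ω = ψ.θ (-k) ω := by
  induction k with
  | zero => simp [ψ.theta_zero]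
  | succ k ih =>
    rw [Function.iterate_succ_apply', ih, theta_theta]
    push_cast
    ring_nf

def pullbackTail (B : Set E) (m : ℕ) (ω : Ω) : Set E :=
  closure (⋃ k ≥ m, ψ.pullback k ω '' B)

def discreteOmegaLimit (B : Set E) (ω : Ω) : Set E :=
  ⋂ m : ℕ, ψ.pullbackTail B m ω

def omegaLimitOfBalls (x₀ : E) (ω : Ω) : Set E :=
  closure (⋃ c : ℕ, ψ.discreteOmegaLimit (closedBall x₀ c) ω)

theorem antitone_pullbackTail (B : Set E) (ω : Ω) : Antitone fun m => ψ.pullbackTail B m ω :=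
  fun _ _ h => closure_mono <| iUnion₂_subset fun k hk =>
    subset_iUnion₂ (s := fun (k : ℕ) (_ : k ≥ _) => ψ.pullback k ω '' B) k (h.trans hk)

theorem tendsto_semiDist_pullbackTail {B A : Set E} {ω : Ω}
    (hattr : Tendsto (fun t => semiDist (ψ.pullback t ω '' B) A) atTop (𝓝 0)) :
    Tendsto (fun m => semiDist (ψ.pullbackTail B m ω) A) atTop (𝓝 0) := by
  rw [ENNReal.tendsto_nhds_zero] at hattr ⊢
  intro ε hε
  obtain ⟨T, hT⟩ := eventually_atTop.1 (hattr ε hε)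
  filter_upwards [tendsto_natCast_atTop_atTop.eventually_ge_atTop T] with m hm
  rw [pullbackTail, semiDist_closure, semiDist_le_iff]
  simp only [mem_iUnion, exists_prop]
  rintro _ ⟨k, hk, x, hx, rfl⟩
  exact semiDist_le_iff.1 (hT k (hm.trans (by exact_mod_cast hk))) _ (mem_image_of_mem _ hx)

theorem exists_tendsto_of_mem_discreteOmegaLimit {B : Set E} {ω : Ω} {y : E}
    (hy : y ∈ ψ.discreteOmegaLimit B ω) :
    ∃ k : ℕ → ℕ, Tendsto k atTop atTop ∧ ∃ x : ℕ → E, (∀ j, x j ∈ B) ∧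
      Tendsto (fun j => ψ.pullback (k j) ω (x j)) atTop (𝓝 y) := by
  have hnear : ∀ j : ℕ, ∃ k ≥ j, ∃ x ∈ B, dist (ψ.pullback k ω x) y < 1 / (j + 1) := by
    intro j
    obtain ⟨_, hz, hzy⟩ := Metric.mem_closure_iff.1 (mem_iInter.1 hy j) _ Nat.one_div_pos_of_nat
    simp only [mem_iUnion, exists_prop] at hz
    obtain ⟨k, hk, x, hx, rfl⟩ := hz
    exact ⟨k, hk, x, hx, by rwa [dist_comm]⟩
  choose k hk x hx hxy using hnear
  exact ⟨k, tendsto_atTop_mono hk tendsto_id, x, hx, tendsto_iff_dist_tendsto_zero.2 <|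
    squeeze_zero (fun _ => dist_nonneg) (fun j => (hxy j).le)
      tendsto_one_div_add_atTop_nhds_zero_nat⟩

theorem exists_eq_pullback_of_tendsto {s : ℝ} (hs : 0 ≤ s) {ω : Ω} {B K : Set E}
    (hattr : Tendsto (fun t => semiDist (ψ.pullback t (ψ.θ (-s) ω) '' B) K) atTop (𝓝 0))
    (hKc : IsCompact K) (hKne : K.Nonempty) {u : ℕ → ℝ} (hu : Tendsto u atTop atTop)
    {x : ℕ → E} (hx : ∀ j, x j ∈ B) {y : E}
    (hy : Tendsto (fun j => ψ.pullback (u j) ω (x j)) atTop (𝓝 y)) :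
    ∃ w ∈ K, ψ.pullback s ω w = y := by
  have hus : Tendsto (fun j => u j + -s) atTop atTop := tendsto_atTop_add_const_right _ _ hu
  obtain ⟨w, hwK, ι, hι, hw⟩ := hKc.exists_subseq_tendsto_of_tendsto_infEDist hKne
    (tendsto_infEDist_of_tendsto_semiDist (fun j => mem_image_of_mem _ (hx j)) (hattr.comp hus))
  refine ⟨w, hwK, tendsto_nhds_unique (((ψ.continuous_pullback hs ω).tendsto w).comp hw)
    ((hy.comp hι.tendsto_atTop).congr' ?_)⟩
  filter_upwards [(hu.comp hι.tendsto_atTop).eventually_ge_atTop s] with j hj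
  have hj' : 0 ≤ u (ι j) + -s := by simp only [Function.comp_apply] at hj; linarith
  dsimp only [Function.comp_apply]
  rw [← Function.comp_apply (f := ψ.pullback s ω), ← ψ.pullback_add hs hj', neg_add_cancel_right]

structure GoodFiber (K : Ω → Set E) (x₀ : E) (ω : Ω) : Prop where
  attracts : ∀ n k : ℕ, Tendsto (fun t => semiDist
    (ψ.pullback t (ψ.θ (-k) ω) '' closedBall x₀ n) (K (ψ.θ (-k) ω))) atTop (𝓝 0)
  recurrent : ∃ c : ℕ, ∃ᶠ k : ℕ in atTop, K (ψ.θ (-k) ω) ⊆ closedBall x₀ c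

variable {ψ} {K : Ω → Set E} {x₀ : E} {ω : Ω}

theorem GoodFiber.tendsto_semiDist_closedBall (hg : ψ.GoodFiber K x₀ ω) (n : ℕ) :
    Tendsto (fun t => semiDist (ψ.pullback t ω '' closedBall x₀ n) (K ω)) atTop (𝓝 0) := by
  simpa [ψ.theta_zero] using hg.attracts n 0

theorem mem_omegaLimitOfBalls_of_tendsto (hKc : ∀ ω, IsCompact (K ω))
    (hKne : ∀ ω, (K ω).Nonempty) (hg : ψ.GoodFiber K x₀ ω) {u : ℕ → ℝ}
    (hu : Tendsto u atTop atTop) {n : ℕ} {x : ℕ → E} (hx : ∀ j, x j ∈ closedBall x₀ n) {y : E}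
    (hy : Tendsto (fun j => ψ.pullback (u j) ω (x j)) atTop (𝓝 y)) :
    y ∈ ψ.omegaLimitOfBalls x₀ ω := by
  obtain ⟨c, hc⟩ := hg.recurrent
  refine subset_closure (mem_iUnion.2 ⟨c, mem_iInter.2 fun m => subset_closure ?_⟩)
  obtain ⟨k, hkm, hkc⟩ := hc.forall_exists_of_atTop m
  obtain ⟨w, hwK, rfl⟩ := ψ.exists_eq_pullback_of_tendsto (Nat.cast_nonneg k) (hg.attracts n k)
    (hKc _) (hKne _) hu hx hy
  exact mem_iUnion₂.2 ⟨k, hkm, mem_image_of_mem _ (hkc hwK)⟩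

theorem exists_subseq_tendsto_mem_omegaLimitOfBalls (hKc : ∀ ω, IsCompact (K ω))
    (hKne : ∀ ω, (K ω).Nonempty) (hg : ψ.GoodFiber K x₀ ω) {u : ℕ → ℝ}
    (hu : Tendsto u atTop atTop) {n : ℕ} {x : ℕ → E} (hx : ∀ j, x j ∈ closedBall x₀ n) :
    ∃ w ∈ ψ.omegaLimitOfBalls x₀ ω, ∃ ι : ℕ → ℕ, StrictMono ι ∧
      Tendsto (fun j => ψ.pullback (u (ι j)) ω (x (ι j))) atTop (𝓝 w) := by
  obtain ⟨w, -, ι, hι, hw⟩ := (hKc ω).exists_subseq_tendsto_of_tendsto_infEDist (hKne ω)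
    (tendsto_infEDist_of_tendsto_semiDist (fun j => mem_image_of_mem _ (hx j))
      ((hg.tendsto_semiDist_closedBall n).comp hu))
  exact ⟨w, mem_omegaLimitOfBalls_of_tendsto hKc hKne hg (hu.comp hι.tendsto_atTop)
    (fun j => hx (ι j)) hw, ι, hι, hw⟩

theorem omegaLimitOfBalls_nonempty (hKc : ∀ ω, IsCompact (K ω)) (hKne : ∀ ω, (K ω).Nonempty)
    (hg : ψ.GoodFiber K x₀ ω) : (ψ.omegaLimitOfBalls x₀ ω).Nonempty := by
  obtain ⟨w, hw, -⟩ := exists_subseq_tendsto_mem_omegaLimitOfBalls hKc hKne hg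
    tendsto_natCast_atTop_atTop (n := 0) fun _ => mem_closedBall_self (Nat.cast_nonneg 0)
  exact ⟨w, hw⟩

theorem omegaLimitOfBalls_subset (hKc : ∀ ω, IsCompact (K ω)) (hg : ψ.GoodFiber K x₀ ω) :
    ψ.omegaLimitOfBalls x₀ ω ⊆ K ω :=
  closure_minimal (iUnion_subset fun c => iInter_subset_of_tendsto_semiDist (hKc ω).isClosed
    (ψ.tendsto_semiDist_pullbackTail (hg.tendsto_semiDist_closedBall c))) (hKc ω).isClosed

theorem isCompact_omegaLimitOfBalls (hKc : ∀ ω, IsCompact (K ω)) (hg : ψ.GoodFiber K x₀ ω) :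
    IsCompact (ψ.omegaLimitOfBalls x₀ ω) :=
  (hKc ω).of_isClosed_subset isClosed_closure (omegaLimitOfBalls_subset hKc hg)

theorem tendsto_semiDist_omegaLimitOfBalls (hKc : ∀ ω, IsCompact (K ω))
    (hKne : ∀ ω, (K ω).Nonempty) (hg : ψ.GoodFiber K x₀ ω) {B : Set E} {n : ℕ}
    (hB : B ⊆ closedBall x₀ n) :
    Tendsto (fun t => semiDist (ψ.pullback t ω '' B) (ψ.omegaLimitOfBalls x₀ ω)) atTop (𝓝 0) := by
  rw [ENNReal.tendsto_nhds_zero]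
  by_contra! hfar
  obtain ⟨ε, hε, hfreq⟩ := hfar
  have hseq : ∀ j : ℕ, ∃ t ≥ (j : ℝ), ∃ x ∈ B,
      ε < infEDist (ψ.pullback t ω x) (ψ.omegaLimitOfBalls x₀ ω) := fun j => by
    obtain ⟨t, hjt, ht⟩ := hfreq.forall_exists_of_atTop j
    obtain ⟨_, ⟨x, hx, rfl⟩, hxε⟩ := exists_lt_infEDist_of_lt_semiDist ht
    exact ⟨t, hjt, x, hx, hxε⟩
  choose t ht x hx hxε using hseq
  obtain ⟨w, hwA, ι, -, hw⟩ := exists_subseq_tendsto_mem_omegaLimitOfBalls hKc hKne hg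
    (tendsto_atTop_mono ht tendsto_natCast_atTop_atTop) fun j => hB (hx j)
  have hεw : ε ≤ infEDist w (ψ.omegaLimitOfBalls x₀ ω) :=
    ge_of_tendsto ((continuous_infEDist.tendsto w).comp hw)
      (Eventually.of_forall fun j => (hxε (ι j)).le)
  rw [infEDist_zero_of_mem hwA] at hεw
  exact hε.ne' (le_zero_iff.1 hεw)

theorem image_omegaLimitOfBalls_subset (hKc : ∀ ω, IsCompact (K ω))
    (hKne : ∀ ω, (K ω).Nonempty) {t : ℝ} (ht : 0 ≤ t) (hg : ψ.GoodFiber K x₀ (ψ.θ t ω)) :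
    (fun x => ψ.φ t x ω) '' ψ.omegaLimitOfBalls x₀ ω ⊆ ψ.omegaLimitOfBalls x₀ (ψ.θ t ω) := by
  refine (image_closure_subset_closure_image (ψ.continuous_phi t ht ω)).trans
    (closure_minimal ?_ isClosed_closure)
  rw [image_iUnion]
  refine iUnion_subset fun c => ?_
  rintro _ ⟨y, hy, rfl⟩
  obtain ⟨k, hk, x, hx, hxy⟩ := ψ.exists_tendsto_of_mem_discreteOmegaLimit hy
  refine mem_omegaLimitOfBalls_of_tendsto hKc hKne hg
    (tendsto_atTop_add_const_right _ t (tendsto_natCast_atTop_atTop.comp hk)) hx ?_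
  simp only [Function.comp_apply, ψ.pullback_add_theta ht (Nat.cast_nonneg _)]
  exact ((ψ.continuous_phi t ht ω).tendsto y).comp hxy

theorem omegaLimitOfBalls_subset_image (hKc : ∀ ω, IsCompact (K ω))
    (hKne : ∀ ω, (K ω).Nonempty) {t : ℝ} (ht : 0 ≤ t) (hg : ψ.GoodFiber K x₀ ω) :
    ψ.omegaLimitOfBalls x₀ (ψ.θ t ω) ⊆ (fun x => ψ.φ t x ω) '' ψ.omegaLimitOfBalls x₀ ω := by
  refine closure_minimal (iUnion_subset fun c y hy => ?_)
    ((isCompact_omegaLimitOfBalls hKc hg).image (ψ.continuous_phi t ht ω)).isClosed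
  obtain ⟨k, hk, x, hx, hxy⟩ := ψ.exists_tendsto_of_mem_discreteOmegaLimit hy
  have hkt : Tendsto (fun j => (k j : ℝ) + -t) atTop atTop :=
    tendsto_atTop_add_const_right _ _ (tendsto_natCast_atTop_atTop.comp hk)
  obtain ⟨w, hwA, ι, hι, hw⟩ := exists_subseq_tendsto_mem_omegaLimitOfBalls hKc hKne hg hkt hx
  refine ⟨w, hwA, tendsto_nhds_unique (((ψ.continuous_phi t ht ω).tendsto w).comp hw)
    ((hxy.comp hι.tendsto_atTop).congr' ?_)⟩
  filter_upwards [(hkt.comp hι.tendsto_atTop).eventually_ge_atTop 0] with j hj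
  simp only [Function.comp_apply] at hj ⊢
  rw [← ψ.pullback_add_theta ht hj, neg_add_cancel_right]

theorem image_omegaLimitOfBalls (hKc : ∀ ω, IsCompact (K ω)) (hKne : ∀ ω, (K ω).Nonempty)
    {t : ℝ} (ht : 0 ≤ t) (hg : ψ.GoodFiber K x₀ ω) (hg' : ψ.GoodFiber K x₀ (ψ.θ t ω)) :
    (fun x => ψ.φ t x ω) '' ψ.omegaLimitOfBalls x₀ ω = ψ.omegaLimitOfBalls x₀ (ψ.θ t ω) :=
  (image_omegaLimitOfBalls_subset hKc hKne ht hg').antisymm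
    (omegaLimitOfBalls_subset_image hKc hKne ht hg)

theorem infEDist_omegaLimitOfBalls (hKc : ∀ ω, IsCompact (K ω)) (hKne : ∀ ω, (K ω).Nonempty)
    (hg : ψ.GoodFiber K x₀ ω) (x : E) :
    infEDist x (ψ.omegaLimitOfBalls x₀ ω) =
      ⨅ c : ℕ, ⨆ m : ℕ, infEDist x (ψ.pullbackTail (closedBall x₀ c) m ω) := by
  rw [omegaLimitOfBalls, infEDist_closure, infEDist_iUnion]
  exact iInf_congr fun c => infEDist_iInter_eq_iSup (ψ.antitone_pullbackTail _ ω)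
    (fun _ => isClosed_closure) (hKc ω) (hKne ω)
    (ψ.tendsto_semiDist_pullbackTail (hg.tendsto_semiDist_closedBall c)) x

variable (ψ) in
theorem measurable_infEDist_pullbackTail [SeparableSpace E] [OpensMeasurableSpace E]
    (B : Set E) (m : ℕ) (x : E) : Measurable fun ω => infEDist x (ψ.pullbackTail B m ω) := by
  simp only [pullbackTail, infEDist_closure, infEDist_iUnion]
  exact Measurable.iInf fun k => Measurable.iInf fun _ =>
    measurable_infEDist_image (ψ.continuous_pullback (Nat.cast_nonneg k))
      (ψ.measurable_pullback_apply k) (IsSeparable.of_separableSpace B) x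

theorem isCompactRandomSet_piecewise [SeparableSpace E] [OpensMeasurableSpace E]
    (hK : IsCompactRandomSet K) {G : Set Ω} [DecidablePred (· ∈ G)] (hG : MeasurableSet G)
    (hgood : ∀ ω ∈ G, ψ.GoodFiber K x₀ ω) :
    IsCompactRandomSet (G.piecewise (ψ.omegaLimitOfBalls x₀) K) := by
  refine ⟨fun ω => ?_, fun ω => ?_, fun x => ?_⟩
  · by_cases hω : ω ∈ G
    · simpa [hω] using isCompact_omegaLimitOfBalls hK.1 (hgood ω hω)
    · simpa [hω] using hK.1 ω
  · by_cases hω : ω ∈ G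
    · simpa [hω] using omegaLimitOfBalls_nonempty hK.1 hK.2.1 (hgood ω hω)
    · simpa [hω] using hK.2.1 ω
  · have hdist : (fun ω => infDist x (G.piecewise (ψ.omegaLimitOfBalls x₀) K ω)) =
        G.piecewise (fun ω => (⨅ c : ℕ, ⨆ m : ℕ,
          infEDist x (ψ.pullbackTail (closedBall x₀ c) m ω)).toReal)
          (fun ω => infDist x (K ω)) := by
      ext ω
      by_cases hω : ω ∈ G
      · simp [hω, infDist, infEDist_omegaLimitOfBalls hK.1 hK.2.1 (hgood ω hω)]
      · simp [hω]
    rw [hdist]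
    exact (Measurable.iInf fun c => Measurable.iSup fun m =>
      ψ.measurable_infEDist_pullbackTail _ m x).ennreal_toReal.piecewise hG (hK.2.2 x)

theorem ae_goodFiber [IsFiniteMeasure P] [SeparableSpace E] (hK : IsCompactRandomSet K)
    (hattr : ∀ n : ℕ, StronglyAttracts ψ K (closedBall x₀ n)) :
    ∀ᵐ ω ∂P, ψ.GoodFiber K x₀ ω := by
  have hattracts : ∀ᵐ ω ∂P, ∀ n k : ℕ, Tendsto (fun t => semiDist
      (ψ.pullback t (ψ.θ (-k) ω) '' closedBall x₀ n) (K (ψ.θ (-k) ω))) atTop (𝓝 0) := by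
    simp only [ae_all_iff]
    exact fun n k => (ψ.measurePreserving_theta (-k)).quasiMeasurePreserving.ae (hattr n)
  have hrec : ∀ᵐ ω ∂P, ∀ c : ℕ, K ω ⊆ closedBall x₀ c →
      ∃ᶠ k : ℕ in atTop, K (ψ.θ (-k) ω) ⊆ closedBall x₀ c := by
    rw [ae_all_iff]
    intro c
    simpa only [ψ.iterate_theta_neg_one, mem_ofPred_eq] using
      (ψ.measurePreserving_theta (-1)).conservative.ae_mem_imp_frequently_image_mem
        (hK.measurableSet_subset_closedBall x₀ c).nullMeasurableSet
  filter_upwards [hattracts, hrec] with ω hattr' hrec'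
  obtain ⟨r, hr⟩ := (hK.1 ω).isBounded.subset_closedBall x₀
  obtain ⟨c, hc⟩ := exists_nat_ge r
  exact ⟨hattr', c, hrec' c (hr.trans (closedBall_subset_closedBall hc))⟩

end ContinuousRDS

theorem strongB_attractor_of_strongly_attracting_set_general
    [SecondCountableTopology E] [BorelSpace E] [IsProbabilityMeasure P]
    (ψ : ContinuousRDS E Ω P) (K : Ω → Set E) (hK : IsCompactRandomSet K)
    (hattr : ∀ B : Set E, Bornology.IsBounded B → StronglyAttracts ψ K B) :
    ∃ A : Ω → Set E, IsStrongAttractor ψ {B : Set E | Bornology.IsBounded B} A := by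
  classical
  obtain ⟨ω₀⟩ := nonempty_of_isProbabilityMeasure P
  obtain ⟨x₀, -⟩ := hK.2.1 ω₀
  obtain ⟨G, hG, hGm, hgood⟩ :=
    (ψ.ae_goodFiber hK fun n => hattr _ isBounded_closedBall).exists_measurable_mem
  have hAG : ∀ ω ∈ G, G.piecewise (ψ.omegaLimitOfBalls x₀) K ω = ψ.omegaLimitOfBalls x₀ ω :=
    fun ω hω => G.piecewise_eq_of_mem _ _ hω
  refine ⟨G.piecewise (ψ.omegaLimitOfBalls x₀) K,
    ψ.isCompactRandomSet_piecewise hK hGm hgood, fun t ht => ?_, fun B hB => ?_⟩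
  · filter_upwards [hG, (ψ.measurePreserving_theta t).quasiMeasurePreserving.ae hG]
      with ω hω hθω
    rw [hAG ω hω, hAG _ hθω]
    exact ψ.image_omegaLimitOfBalls hK.1 hK.2.1 ht (hgood ω hω) (hgood _ hθω)
  · obtain ⟨r, hr⟩ := hB.subset_closedBall x₀
    obtain ⟨n, hn⟩ := exists_nat_ge r
    filter_upwards [hG] with ω hω
    rw [hAG ω hω]
    exact ψ.tendsto_semiDist_omegaLimitOfBalls hK.1 hK.2.1 (hgood ω hω)
      (hr.trans (closedBall_subset_closedBall hn))

/-- If there is a compact random set `K` strongly attracting every bounded subset of `E`,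
then `φ` has a strong `B`-attractor. -/
theorem strongB_attractor_of_strongly_attracting_set
    [CompleteSpace E] [SecondCountableTopology E] [BorelSpace E] [IsProbabilityMeasure P]
    (ψ : ContinuousRDS E Ω P) (K : Ω → Set E) (hK : IsCompactRandomSet K)
    (hattr : ∀ B : Set E, Bornology.IsBounded B → StronglyAttracts ψ K B) :
    ∃ A : Ω → Set E, IsStrongAttractor ψ {B : Set E | Bornology.IsBounded B} A :=
  strongB_attractor_of_strongly_attracting_set_general ψ K hK hattr
end
end

section
/- Let φ be a continuous RDS on a Polish space E over an MDS (Ω,𝓕,P,(ϑ_t)). If there exists a compact random set K which weakly attracts every bounded subset of E, then for every ε>0 there exists a compact subset C_ε of E such that for each δ>0 and each bounded subset B of E there is a t_0>0 with P{φ(t,ω)(B) ⊆ C_ε^δ} ≥ 1−ε for all t ≥ t_0. -/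
open MeasureTheory Set Filter Topology Metric

noncomputable section

variable {E Ω : Type*} [MetricSpace E] [MeasurableSpace E] [MeasurableSpace Ω] {P : Measure Ω}

/-!
Since `ϑ_t` preserves `P` and `φ(t, ω) = φ(t, ϑ_{-t}(ϑ_t ω))`, the probability that the forward
image `φ(t, ω)(B)` leaves `C^δ` is at most `P{K ⊄ C} + P{d(φ(t, ϑ_{-t} ω)(B), K(ω)) > δ}`, and the
second term is small for large `t` by weak attraction. It remains to choose a compact `C` with
`P{K ⊄ C} ≤ ε/2`: the law of a compact random set in a Polish space is tight. For each `n`, with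
probability close to one `K(ω)` is covered by finitely many closed `1/(n+1)`-balls centred at a
dense sequence; the intersection over `n` of these finite unions is closed and totally bounded.
-/

namespace IsCompactRandomSet

omit [MeasurableSpace E]

variable {K : Ω → Set E}

theorem measurableSet_setOf_subset [SecondCountableTopology E] (hK : IsCompactRandomSet K)
    {F : Set E} (hF : IsClosed F) : MeasurableSet {ω | K ω ⊆ F} := by
  obtain ⟨D, hD_countable, hD_dense⟩ := TopologicalSpace.exists_countable_dense E
  set S : Set (E × ℚ) := {p | p.1 ∈ D ∧ closedBall p.1 p.2 ⊆ Fᶜ}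
  have hS : S.Countable := (hD_countable.prod (Set.countable_univ (α := ℚ))).mono
    fun _ hp => mem_prod.mpr ⟨hp.1, mem_univ _⟩
  have hcompl : {ω | K ω ⊆ F}ᶜ = ⋃ p ∈ S, {ω | infDist p.1 (K ω) < p.2} := by
    ext ω
    simp only [mem_compl_iff, mem_ofPred_eq, mem_iUnion, exists_prop]
    constructor
    · intro hsub
      obtain ⟨x, hxK, hxF⟩ := not_subset.mp hsub
      obtain ⟨r, hr, hball⟩ := Metric.isOpen_iff.mp hF.isOpen_compl x hxF
      obtain ⟨y, hyD, hxy⟩ := hD_dense.exists_dist_lt x (by positivity : (0 : ℝ) < r / 3)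
      rw [dist_comm] at hxy
      obtain ⟨q, hyq, hqr⟩ := exists_rat_btwn (by linarith : dist y x < r / 2)
      refine ⟨(y, q), ⟨hyD, (closedBall_subset_ball' (by linarith)).trans hball⟩, ?_⟩
      exact (infDist_le_dist_of_mem hxK).trans_lt hyq
    · rintro ⟨⟨y, q⟩, ⟨-, hball⟩, hlt⟩ hsub
      obtain ⟨x, hxK, hxy⟩ := (infDist_lt_iff (hK.2.1 ω)).mp hlt
      exact hball (mem_closedBall'.mpr hxy.le) (hsub hxK)
  rw [← compl_compl {ω | K ω ⊆ F}, hcompl]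
  exact (MeasurableSet.biUnion hS fun p _ =>
    measurableSet_lt (hK.2.2 p.1) measurable_const).compl

theorem exists_finite_measure_not_subset_biUnion_closedBall_le [SecondCountableTopology E]
    [IsFiniteMeasure P] (hK : IsCompactRandomSet K) {r : ℝ} (hr : 0 < r) {η : ENNReal}
    (hη : η ≠ 0) :
    ∃ s : Finset E, P {ω | ¬ K ω ⊆ ⋃ x ∈ s, closedBall x r} ≤ η := by
  classical
  rcases isEmpty_or_nonempty E with hE | hE
  · exact ⟨∅, by simp [Set.eq_empty_of_isEmpty]⟩
  obtain ⟨u, hu⟩ := TopologicalSpace.exists_dense_seq E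
  set A : ℕ → Set Ω := fun m => {ω | ¬ K ω ⊆ ⋃ k ∈ Finset.range m, closedBall (u k) r}
  have hA_meas : ∀ m, MeasurableSet (A m) := fun m =>
    (hK.measurableSet_setOf_subset (isClosed_biUnion_finset fun _ _ => isClosed_closedBall)).compl
  have hA_anti : Antitone A := fun m m' hmm' ω hω hsub =>
    hω (hsub.trans (biUnion_subset_biUnion_left (by simpa using hmm')))
  have hA_empty : ⋂ m, A m = ∅ := by
    refine eq_empty_of_forall_notMem fun ω hω => ?_
    have hcover : K ω ⊆ ⋃ m, ⋃ k ∈ Finset.range m, ball (u k) r := fun x _ =>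
      let ⟨k, hk⟩ := hu.exists_dist_lt x hr
      mem_iUnion.mpr ⟨k + 1, mem_iUnion₂.mpr ⟨k, by simp, mem_ball.mpr hk⟩⟩
    obtain ⟨m, hm⟩ := (hK.1 ω).elim_directed_cover _
      (fun m => isOpen_biUnion fun k _ => isOpen_ball) hcover (Monotone.directed_le fun m m' hmm' =>
        biUnion_subset_biUnion_left (by simpa using hmm'))
    exact mem_iInter.mp hω m (hm.trans (iUnion₂_mono fun k _ => ball_subset_closedBall))
  have htends : Tendsto (P ∘ A) atTop (𝓝 0) := by
    simpa [hA_empty] using tendsto_measure_iInter_atTop (fun m => (hA_meas m).nullMeasurableSet)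
      hA_anti ⟨0, measure_ne_top P _⟩
  obtain ⟨m, hm⟩ := (htends.eventually_lt_const (pos_iff_ne_zero.mpr hη)).exists
  exact ⟨(Finset.range m).image u, by simpa [A] using hm.le⟩

theorem exists_isCompact_measure_not_subset_le [CompleteSpace E] [SecondCountableTopology E]
    [IsFiniteMeasure P] (hK : IsCompactRandomSet K) {η : ENNReal} (hη : η ≠ 0) :
    ∃ C : Set E, IsCompact C ∧ P {ω | ¬ K ω ⊆ C} ≤ η := by
  obtain ⟨η', hη'_pos, hη'_sum⟩ := ENNReal.exists_pos_sum_of_countable' hη ℕ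
  choose s hs using fun n : ℕ => hK.exists_finite_measure_not_subset_biUnion_closedBall_le
    (P := P) (Nat.one_div_pos_of_nat (α := ℝ) (n := n)) (hη'_pos n).ne'
  set F : ℕ → Set E := fun n => ⋃ x ∈ s n, closedBall x (1 / (n + 1))
  refine ⟨⋂ n, F n, ?_, ?_⟩
  · refine TotallyBounded.isCompact_of_isClosed ?_
      (isClosed_iInter fun n => isClosed_biUnion_finset fun _ _ => isClosed_closedBall)
    refine Metric.totallyBounded_iff.mpr fun ε hε => ?_
    obtain ⟨n, hn⟩ := exists_nat_one_div_lt hε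
    exact ⟨s n, (s n).finite_toSet, (iInter_subset F n).trans
      (iUnion₂_mono fun x _ => closedBall_subset_ball hn)⟩
  · calc P {ω | ¬ K ω ⊆ ⋂ n, F n} = P (⋃ n, {ω | ¬ K ω ⊆ F n}) := by
          simp only [subset_iInter_iff, not_forall, ofPred_exists]
      _ ≤ ∑' n, P {ω | ¬ K ω ⊆ F n} := measure_iUnion_le _
      _ ≤ ∑' n, η' n := ENNReal.tsum_le_tsum hs
      _ ≤ η := hη'_sum.le

end IsCompactRandomSet

theorem MetricDS.theta_neg_apply_theta (ϑ : MetricDS Ω P) (t : ℝ) (ω : Ω) :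
    ϑ.θ (-t) (ϑ.θ t ω) = ω := by
  rw [← Function.comp_apply (f := ϑ.θ (-t)), ← ϑ.theta_add, neg_add_cancel, ϑ.theta_zero, id]

theorem subset_cthickening_of_semiDist_le {X : Type*} [PseudoEMetricSpace X] {B A : Set X}
    {δ : ℝ} (h : semiDist B A ≤ ENNReal.ofReal δ) : B ⊆ cthickening δ A := fun b hb =>
  mem_cthickening_iff.mpr ((le_iSup₂ (f := fun b (_ : b ∈ B) => infEDist b A) b hb).trans h)

theorem ofReal_one_sub_le_measure_of_measure_compl_le {α : Type*} [MeasurableSpace α]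
    {μ : Measure α} [IsProbabilityMeasure μ] {s : Set α} {ε : ℝ} (hε : 0 ≤ ε)
    (h : μ sᶜ ≤ ENNReal.ofReal ε) : ENNReal.ofReal (1 - ε) ≤ μ s := by
  rw [ENNReal.ofReal_sub _ hε, ENNReal.ofReal_one, tsub_le_iff_right]
  calc 1 = μ univ := measure_univ.symm
    _ ≤ μ s + μ sᶜ := measure_univ_le_add_compl s
    _ ≤ μ s + ENNReal.ofReal ε := by gcongr

theorem ContinuousRDS.measure_not_image_subset_cthickening_le (ψ : ContinuousRDS E Ω P)
    (K : Ω → Set E) (C B : Set E) (δ t : ℝ) :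
    P {ω | ¬ (fun x => ψ.φ t x ω) '' B ⊆ cthickening δ C} ≤ P {ω | ¬ K ω ⊆ C} +
      P {ω | ENNReal.ofReal δ < semiDist ((fun x => ψ.φ t x (ψ.θ (-t) ω)) '' B) (K ω)} := by
  set bad := {ω | ¬ K ω ⊆ C} ∪
    {ω | ENNReal.ofReal δ < semiDist ((fun x => ψ.φ t x (ψ.θ (-t) ω)) '' B) (K ω)}
  have hsub : {ω | ¬ (fun x => ψ.φ t x ω) '' B ⊆ cthickening δ C} ⊆ ψ.θ t ⁻¹' bad := by
    intro ω hω
    by_contra hgood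
    simp only [bad, mem_preimage, mem_union, mem_ofPred_eq, not_or, not_not, not_lt,
      ψ.theta_neg_apply_theta] at hgood
    exact hω ((subset_cthickening_of_semiDist_le hgood.2).trans
      (cthickening_subset_of_subset δ hgood.1))
  have hθ := ψ.measurePreserving_theta t
  calc _ ≤ P (ψ.θ t ⁻¹' bad) := measure_mono hsub
    _ ≤ P.map (ψ.θ t) bad := Measure.le_map_apply hθ.measurable.aemeasurable _
    _ = P bad := by rw [hθ.map_eq]
    _ ≤ _ := measure_union_le _ _

theorem weakB_attractor_necessary_condition_general
    [CompleteSpace E] [SecondCountableTopology E] [IsProbabilityMeasure P]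
    (ψ : ContinuousRDS E Ω P) (K : Ω → Set E) (hK : IsCompactRandomSet K)
    (hattr : ∀ B : Set E, Bornology.IsBounded B → WeaklyAttracts ψ K B) :
    ∀ ε : ℝ, 0 < ε → ∃ Cε : Set E, IsCompact Cε ∧
      ∀ δ : ℝ, 0 < δ → ∀ B : Set E, Bornology.IsBounded B →
        ∃ t₀ : ℝ, 0 < t₀ ∧ ∀ t : ℝ, t₀ ≤ t →
          ENNReal.ofReal (1 - ε) ≤
            P {ω | (fun x => ψ.φ t x ω) '' B ⊆ cthickening δ Cε} := by
  intro ε hε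
  have hε₂ : 0 < ENNReal.ofReal (ε / 2) := ENNReal.ofReal_pos.mpr (half_pos hε)
  obtain ⟨C, hC, hKC⟩ := hK.exists_isCompact_measure_not_subset_le (P := P) hε₂.ne'
  refine ⟨C, hC, fun δ hδ B hB => ?_⟩
  obtain ⟨T, hT⟩ := eventually_atTop.mp
    ((hattr B hB _ (ENNReal.ofReal_pos.mpr hδ)).eventually_lt_const hε₂)
  refine ⟨max T 1, lt_max_of_lt_right one_pos, fun t ht => ?_⟩
  refine ofReal_one_sub_le_measure_of_measure_compl_le hε.le ?_
  calc P {ω | (fun x => ψ.φ t x ω) '' B ⊆ cthickening δ C}ᶜ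
      ≤ P {ω | ¬ K ω ⊆ C} + P {ω | ENNReal.ofReal δ <
          semiDist ((fun x => ψ.φ t x (ψ.θ (-t) ω)) '' B) (K ω)} :=
        ψ.measure_not_image_subset_cthickening_le K C B δ t
    _ ≤ ENNReal.ofReal (ε / 2) + ENNReal.ofReal (ε / 2) :=
        add_le_add hKC (hT t (le_of_max_le_left ht)).le
    _ = ENNReal.ofReal ε := by rw [← ENNReal.ofReal_add (by positivity) (by positivity), add_halves]

/-- If there is a compact random set `K` weakly attracting every bounded subset of `E`, then
for every `ε > 0` there is a compact `Cε` such that for each `δ > 0` and each bounded `B ⊆ E`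
there is `t₀ > 0` with `P{φ(t,ω)(B) ⊆ Cε^δ} ≥ 1 - ε` for all `t ≥ t₀`. -/
theorem weakB_attractor_necessary_condition
    [CompleteSpace E] [SecondCountableTopology E] [BorelSpace E] [IsProbabilityMeasure P]
    (ψ : ContinuousRDS E Ω P) (K : Ω → Set E) (hK : IsCompactRandomSet K)
    (hattr : ∀ B : Set E, Bornology.IsBounded B → WeaklyAttracts ψ K B) :
    ∀ ε : ℝ, 0 < ε → ∃ Cε : Set E, IsCompact Cε ∧
      ∀ δ : ℝ, 0 < δ → ∀ B : Set E, Bornology.IsBounded B →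
        ∃ t₀ : ℝ, 0 < t₀ ∧ ∀ t : ℝ, t₀ ≤ t →
          ENNReal.ofReal (1 - ε) ≤
            P {ω | (fun x => ψ.φ t x ω) '' B ⊆ cthickening δ Cε} :=
  weakB_attractor_necessary_condition_general ψ K hK hattr
end
end

section
/- Let E be a Polish space with metric d, (Ω,𝓕,P) a probability space, and φ : [0,∞) × Ω × E → E jointly measurable with x ↦ φ(t,ω,x) continuous for all t and ω. Let C ⊆ E be compact and nonempty, B ⊆ E closed, and α > 0. Then the map t ↦ γ(t) := sup{η > 0 : P{ω : φ(t,ω,·)(C^η) ⊆ B} ≥ α} is measurable on [0,∞). -/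
open MeasureTheory Set Metric

/-!
For each `η`, the event `{ω | φ(t,ω)(C^η) ⊆ B}` is jointly measurable in `(t, ω)`: by continuity of
`φ(t,ω,·)` and closedness of `B` it suffices to test the points of a countable dense subset of
`C^η`. Hence `t ↦ P{…}` is measurable. The set of admissible `η` is downward closed in `(0, ∞)`,
so its supremum is a countable supremum over rational `η`, including the junk value `0` when the
set is unbounded.
-/

open Classical in
theorem Real.sSup_eq_iSup_rat_of_Ioc_subset {S : Set ℝ} (hpos : S ⊆ Ioi 0)
    (hdown : ∀ η ∈ S, Ioc 0 η ⊆ S) :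
    sSup S = ⨆ q : ℚ, if (q : ℝ) ∈ S then (q : ℝ) else 0 := by
  set f : ℚ → ℝ := fun q => if (q : ℝ) ∈ S then (q : ℝ) else 0
  have exists_rat_gt : ∀ η ∈ S, ∀ c < η, ∃ q : ℚ, (q : ℝ) ∈ S ∧ c < q ∧ f q = q := by
    intro η hη c hc
    obtain ⟨q, hcq, hqη⟩ := exists_rat_btwn (max_lt hc (hpos hη))
    have hqS : (q : ℝ) ∈ S := hdown η hη ⟨(le_max_right c 0).trans_lt hcq, hqη.le⟩
    exact ⟨q, hqS, (le_max_left c 0).trans_lt hcq, if_pos hqS⟩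
  by_cases hbdd : BddAbove S
  swap
  · rw [Real.sSup_of_not_bddAbove hbdd, Real.iSup_of_not_bddAbove]
    rintro ⟨M, hM⟩
    obtain ⟨η, hη, hMη⟩ := not_bddAbove_iff.1 hbdd M
    obtain ⟨q, -, hMq, hfq⟩ := exists_rat_gt η hη M hMη
    exact (hM ⟨q, hfq⟩).not_gt hMq
  rcases S.eq_empty_or_nonempty with rfl | hne
  · simp [f]
  have hf_le : ∀ q, f q ≤ sSup S := fun q => by
    by_cases hq : (q : ℝ) ∈ S
    · simpa [f, hq] using le_csSup hbdd hq
    · simpa [f, hq] using Real.sSup_nonneg fun η hη => (hpos hη).le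
  refine le_antisymm (csSup_le hne fun η hη => le_of_forall_lt fun c hc => ?_) (ciSup_le hf_le)
  obtain ⟨q, -, hcq, hfq⟩ := exists_rat_gt η hη c hc
  exact hcq.trans_le (hfq ▸ le_ciSup ⟨sSup S, forall_mem_range.2 hf_le⟩ q)

theorem measurable_sSup_of_Ioc_subset {α : Type*} [MeasurableSpace α] {S : α → Set ℝ}
    (hpos : ∀ t, S t ⊆ Ioi 0) (hdown : ∀ t, ∀ η ∈ S t, Ioc 0 η ⊆ S t)
    (hmeas : ∀ q : ℚ, MeasurableSet {t | (q : ℝ) ∈ S t}) :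
    Measurable fun t => sSup (S t) := by
  simp_rw [Real.sSup_eq_iSup_rat_of_Ioc_subset (hpos _) (hdown _)]
  exact Measurable.iSup fun q => Measurable.ite (hmeas q) measurable_const measurable_const

theorem measurableSet_setOf_mapsTo {β E F : Type*} [MeasurableSpace β] [TopologicalSpace E]
    [TopologicalSpace.PseudoMetrizableSpace E] [TopologicalSpace F] [MeasurableSpace F]
    [OpensMeasurableSpace F] {g : β → E → F} (hg : ∀ x, Measurable fun b => g b x)
    (hcont : ∀ b, Continuous (g b)) {K : Set E} (hK : TopologicalSpace.IsSeparable K)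
    {B : Set F} (hB : IsClosed B) :
    MeasurableSet {b | MapsTo (g b) K B} := by
  obtain ⟨D, hDK, hDc, hKD⟩ := hK.exists_countable_dense_subset
  -- `g b ⁻¹' B` is closed, so mapping the dense set `D` into `B` already forces `MapsTo`.
  have : {b | MapsTo (g b) K B} = ⋂ x ∈ D, {b | g b x ∈ B} := by
    ext b
    simp only [mem_ofPred_eq, mem_iInter]
    exact ⟨fun h x hx => h (hDK hx), fun h x hx =>
      (hB.preimage (hcont b)).closure_subset_iff.2 (fun y hy => h y hy) (hKD hx)⟩
  rw [this]
  exact .biInter hDc fun x _ => hg x hB.measurableSet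

theorem measurable_gamma_general
    {E Ω : Type*} [MetricSpace E] [SecondCountableTopology E]
    [MeasurableSpace E] [BorelSpace E] [MeasurableSpace Ω]
    (P : Measure Ω) [IsProbabilityMeasure P]
    (φ : ℝ → Ω → E → E)
    (hmeas : Measurable fun p : ℝ × Ω × E => φ p.1 p.2.1 p.2.2)
    (hcont : ∀ t ω, Continuous fun x => φ t ω x)
    (C : Set E)
    (B : Set E) (hB : IsClosed B) (α : ℝ) :
    Measurable fun t : ℝ =>
      sSup {η : ℝ | 0 < η ∧
        ENNReal.ofReal α ≤ P {ω | ∀ x ∈ cthickening η C, φ t ω x ∈ B}} := by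
  refine measurable_sSup_of_Ioc_subset (fun t η hη => hη.1)
    (fun t η hη η' hη' => ⟨hη'.1, hη.2.trans <| measure_mono fun ω hω =>
      MapsTo.mono_left hω (cthickening_mono hη'.2 C)⟩) fun q => ?_
  have hevent : MeasurableSet {p : ℝ × Ω | MapsTo (φ p.1 p.2) (cthickening q C) B} :=
    measurableSet_setOf_mapsTo
      (fun x => hmeas.comp (measurable_fst.prodMk (measurable_snd.prodMk measurable_const)))
      (fun p => hcont p.1 p.2) (.of_separableSpace _) hB
  exact (MeasurableSet.const _).inter
    (measurableSet_le measurable_const (measurable_measure_prodMk_left hevent))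

/-- Measurability of `t ↦ γ(t) := sup {η > 0 : P{ω : φ(t,ω)(C^η) ⊆ B} ≥ α}` for a jointly
measurable map `φ` which is continuous in the space variable, `C` compact nonempty, `B` closed,
`α > 0` (with `sup ∅ = 0`, the convention of `sSup` on `ℝ`). -/
theorem measurable_gamma
    {E Ω : Type*} [MetricSpace E] [CompleteSpace E] [SecondCountableTopology E]
    [MeasurableSpace E] [BorelSpace E] [MeasurableSpace Ω]
    (P : Measure Ω) [IsProbabilityMeasure P]
    (φ : ℝ → Ω → E → E)
    (hmeas : Measurable fun p : ℝ × Ω × E => φ p.1 p.2.1 p.2.2)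
    (hcont : ∀ t ω, Continuous fun x => φ t ω x)
    (C : Set E) (hC : IsCompact C) (hCne : C.Nonempty)
    (B : Set E) (hB : IsClosed B) (α : ℝ) (hα : 0 < α) :
    Measurable fun t : ℝ =>
      sSup {η : ℝ | 0 < η ∧
        ENNReal.ofReal α ≤ P {ω | ∀ x ∈ cthickening η C, φ t ω x ∈ B}} :=
  measurable_gamma_general P φ hmeas hcont C B hB α
end

section
/- Let E be a Polish space with metric d, (Ω,𝓕,P) a probability space, and φ : [0,∞) × Ω × E → E jointly measurable with x ↦ φ(t,ω,x) continuous for all t and ω. Let C ⊆ E be compact and nonempty, B ⊆ E closed, and r ≥ 0. Then the set {(t,ω) ∈ [0,∞) × Ω : φ(t,ω,·)(C^r) ⊆ B} belongs to the product σ-algebra 𝓑([0,∞)) ⊗ 𝓕. -/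
open MeasureTheory Set Metric

/-- By continuity, `f a` maps `K` into the closed set `B` as soon as it maps a countable dense
subset of `K` there, so the condition is a countable intersection of measurable ones. -/
theorem measurableSet_setOf_mapsTo_of_isSeparable {α X Y : Type*} [MeasurableSpace α]
    [TopologicalSpace X] [TopologicalSpace.PseudoMetrizableSpace X]
    [TopologicalSpace Y] [MeasurableSpace Y] [OpensMeasurableSpace Y]
    {f : α → X → Y} (hmeas : ∀ x, Measurable fun a => f a x) (hcont : ∀ a, Continuous (f a))
    {K : Set X} (hK : TopologicalSpace.IsSeparable K) {B : Set Y} (hB : IsClosed B) :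
    MeasurableSet {a | MapsTo (f a) K B} := by
  obtain ⟨D, hDK, hDc, hKD⟩ := hK.exists_countable_dense_subset
  have hdense : {a | MapsTo (f a) K B} = ⋂ x ∈ D, {a | f a x ∈ B} := by
    ext a
    simp only [mem_ofPred_eq, mem_iInter]
    refine ⟨fun h x hx => h (hDK hx), fun h => ?_⟩
    have hclosure : MapsTo (f a) (closure D) B := by
      simpa only [hB.closure_eq] using (show MapsTo (f a) D B from h).closure (hcont a)
    exact hclosure.mono_left hKD
  rw [hdense]
  exact .biInter hDc fun x _ => hmeas x hB.measurableSet

theorem measurableSet_image_cthickening_subset_general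
    {E Ω : Type*} [MetricSpace E] [SecondCountableTopology E]
    [MeasurableSpace E] [BorelSpace E] [MeasurableSpace Ω]
    (φ : ℝ → Ω → E → E)
    (hmeas : Measurable fun p : ℝ × Ω × E => φ p.1 p.2.1 p.2.2)
    (hcont : ∀ t ω, Continuous fun x => φ t ω x)
    (C : Set E)
    (B : Set E) (hB : IsClosed B) (r : ℝ) :
    MeasurableSet {p : ℝ × Ω | ∀ x ∈ cthickening r C, φ p.1 p.2 x ∈ B} :=
  measurableSet_setOf_mapsTo_of_isSeparable (f := fun p : ℝ × Ω => φ p.1 p.2)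
    (fun _ => hmeas.comp (measurable_fst.prodMk (measurable_snd.prodMk measurable_const)))
    (fun p => hcont p.1 p.2) (.of_separableSpace _) hB

/-- For a jointly measurable map `φ` which is continuous in the space variable, `C` compact
nonempty, `B` closed and `r ≥ 0`, the set `{(t,ω) : φ(t,ω)(C^r) ⊆ B}` is product measurable. -/
theorem measurableSet_image_cthickening_subset
    {E Ω : Type*} [MetricSpace E] [CompleteSpace E] [SecondCountableTopology E]
    [MeasurableSpace E] [BorelSpace E] [MeasurableSpace Ω]
    (P : Measure Ω) [IsProbabilityMeasure P]
    (φ : ℝ → Ω → E → E)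
    (hmeas : Measurable fun p : ℝ × Ω × E => φ p.1 p.2.1 p.2.2)
    (hcont : ∀ t ω, Continuous fun x => φ t ω x)
    (C : Set E) (hC : IsCompact C) (hCne : C.Nonempty)
    (B : Set E) (hB : IsClosed B) (r : ℝ) (hr : 0 ≤ r) :
    MeasurableSet {p : ℝ × Ω | ∀ x ∈ cthickening r C, φ p.1 p.2 x ∈ B} :=
  measurableSet_image_cthickening_subset_general φ hmeas hcont C B hB r
end
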